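/- arXiv:1310.7393 — 2 statements merged into one kernel-verified Lean document; each statement's English description precedes it below -/
import Mathlib

section
/- Let h be a horizontal endomorphism on L^π E with associated semispray S and induced almost complex structure F = h[S,h]^{F−N} − J. Then: (i) F∘J = h, (ii) F∘h = −J, (iii) J∘F = v, (iv) F∘v = h∘F. -/
/-!
We work with a Lie algebroid `π : E → M` in a (global) trivialization:
the base `M` is modelled on a real normed space `A`, the fibre of `E` is a real
normed space `B`, the total space is `E = A × B`, sections of `E` are maps
`A → B`, the anchor is `ρ : A → (B →L[ℝ] A)` and the structure function of the
bracket is `Lb : A → (B →L[ℝ] B →L[ℝ] B)`.  The prolongation `L^π E → E` is the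
trivial bundle with fibre `B × B`; its sections are pairs of maps `(A × B) → B`
(the components along the canonical frames `𝒳_α` and `𝒱_α`).
-/

noncomputable section

variable {A B : Type*} [NormedAddCommGroup A] [NormedSpace ℝ A]
  [NormedAddCommGroup B] [NormedSpace ℝ B]

/-- Sections of the prolongation `L^π E → E`. -/
abbrev Sec (A B : Type*) := ((A × B) → B) × ((A × B) → B)

/-- The axioms of a Lie algebroid (smoothness, antisymmetry and the two
structure equations: anchor compatibility and the Jacobi identity). -/
def IsLieAlgebroidData (ρ : A → B →L[ℝ] A) (Lb : A → B →L[ℝ] B →L[ℝ] B) : Prop :=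
  ContDiff ℝ (⊤ : ℕ∞) ρ ∧ ContDiff ℝ (⊤ : ℕ∞) Lb ∧
    (∀ x u v, Lb x u v = - Lb x v u) ∧
    (∀ x u v, fderiv ℝ ρ x (ρ x u) v - fderiv ℝ ρ x (ρ x v) u = ρ x (Lb x u v)) ∧
    (∀ x u v w,
      fderiv ℝ Lb x (ρ x u) v w + Lb x u (Lb x v w) +
        fderiv ℝ Lb x (ρ x v) w u + Lb x v (Lb x w u) +
          fderiv ℝ Lb x (ρ x w) u v + Lb x w (Lb x u v) = 0)

/-- The Lie algebroid bracket `[X, Y]_E` of two sections of `E`. -/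
def abr (ρ : A → B →L[ℝ] A) (Lb : A → B →L[ℝ] B →L[ℝ] B) (X Y : A → B) : A → B :=
  fun x => fderiv ℝ Y x (ρ x (X x)) - fderiv ℝ X x (ρ x (Y x)) + Lb x (X x) (Y x)

/-- The action `ρ(X)(f)` of a section through the anchor. -/
def ρf (ρ : A → B →L[ℝ] A) (X : A → B) (f : A → ℝ) : A → ℝ :=
  fun x => fderiv ℝ f x (ρ x (X x))

/-- Vertical lift `f^∨ = f ∘ π` of a function on `M`. -/
def fvert (f : A → ℝ) : A × B → ℝ := fun p => f p.1

/-- Complete lift `f^c(u) = ρ(u)(f)` of a function on `M`. -/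
def fcomp (ρ : A → B →L[ℝ] A) (f : A → ℝ) : A × B → ℝ :=
  fun p => fderiv ℝ f p.1 (ρ p.1 p.2)

/-- The tangent vector to `E` determined by a prolongation section through the
prolongation anchor `ρ_L(u, z) = z`. -/
def ρL (ρ : A → B →L[ℝ] A) (U : Sec A B) (p : A × B) : A × B :=
  (ρ p.1 (U.1 p), U.2 p)

/-- The bracket `[·,·]_L` of the prolongation Lie algebroid `L^π E`. -/
def pbr (ρ : A → B →L[ℝ] A) (Lb : A → B →L[ℝ] B →L[ℝ] B) (U V : Sec A B) : Sec A B :=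
  (fun p => fderiv ℝ V.1 p (ρL ρ U p) - fderiv ℝ U.1 p (ρL ρ V p) + Lb p.1 (U.1 p) (V.1 p),
   fun p => fderiv ℝ V.2 p (ρL ρ U p) - fderiv ℝ U.2 p (ρL ρ V p))

/-- The vertical endomorphism `J = i ∘ j` of `L^π E`. -/
def vJ (U : Sec A B) : Sec A B := (0, U.1)

/-- The Liouville (Euler) section `C = i ∘ δ`. -/
def Liou : Sec A B := (0, fun p => p.2)

/-- Vertical lift `X^V` of a section of `E` to `L^π E`. -/
def vlift (X : A → B) : Sec A B := (0, fun p => X p.1)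

/-- Complete lift `X^C` of a section of `E` to `L^π E`. -/
def clift (ρ : A → B →L[ℝ] A) (Lb : A → B →L[ℝ] B →L[ℝ] B) (X : A → B) : Sec A B :=
  (fun p => X p.1, fun p => fderiv ℝ X p.1 (ρ p.1 p.2) - Lb p.1 (X p.1) p.2)

/-- The horizontal endomorphism with coefficient `𝓑`
(`h = (𝒳_β + 𝓑^α_β 𝒱_α) ⊗ 𝒳^β`). -/
def hor (𝓑 : A × B → B →L[ℝ] B) (U : Sec A B) : Sec A B :=
  (U.1, fun p => 𝓑 p (U.1 p))

/-- The vertical projector `v = Id − h` associated to a horizontal endomorphism. -/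
def vpr (𝓑 : A × B → B →L[ℝ] B) (U : Sec A B) : Sec A B := U - hor 𝓑 U

/-- Horizontal lift `X^h = h(X^C)`. -/
def hlift (ρ : A → B →L[ℝ] A) (Lb : A → B →L[ℝ] B →L[ℝ] B)
    (𝓑 : A × B → B →L[ℝ] B) (X : A → B) : Sec A B :=
  hor 𝓑 (clift ρ Lb X)

/-- Multiplication of a prolongation section by a function on `E`. -/
def fsmul (g : A × B → ℝ) (U : Sec A B) : Sec A B :=
  (fun p => g p • U.1 p, fun p => g p • U.2 p)

/-- Generalized Frölicher–Nijenhuis bracket `[K, Z]^{F-N}` of a `(1,1)`-tensor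
with a section: `[K, Z]^{F-N}(U) = [K(U), Z]_L − K([U, Z]_L)`. -/
def fnKZ (ρ : A → B →L[ℝ] A) (Lb : A → B →L[ℝ] B →L[ℝ] B)
    (K : Sec A B → Sec A B) (Z U : Sec A B) : Sec A B :=
  pbr ρ Lb (K U) Z - K (pbr ρ Lb U Z)

/-- Generalized Frölicher–Nijenhuis bracket `[Z, K]^{F-N}` of a section with a
`(1,1)`-tensor. -/
def fnZK (ρ : A → B →L[ℝ] A) (Lb : A → B →L[ℝ] B →L[ℝ] B)
    (Z : Sec A B) (K : Sec A B → Sec A B) (U : Sec A B) : Sec A B :=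
  pbr ρ Lb Z (K U) - K (pbr ρ Lb Z U)

/-- Generalized Frölicher–Nijenhuis bracket of two `(1,1)`-tensors, evaluated on
two sections. -/
def fnKL (ρ : A → B →L[ℝ] A) (Lb : A → B →L[ℝ] B →L[ℝ] B)
    (K L' : Sec A B → Sec A B) (U V : Sec A B) : Sec A B :=
  pbr ρ Lb (K U) (L' V) + pbr ρ Lb (L' U) (K V)
    + K (L' (pbr ρ Lb U V)) + L' (K (pbr ρ Lb U V))
    - K (pbr ρ Lb U (L' V)) - K (pbr ρ Lb (L' U) V)
    - L' (pbr ρ Lb U (K V)) - L' (pbr ρ Lb (K U) V)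

/-- The slit total space `E ∖ {0}` (complement of the zero section). -/
def Slit : Set (A × B) := {p | p.2 ≠ 0}

/-- Smoothness of a prolongation section (on all of `E`). -/
def SecSmooth (U : Sec A B) : Prop :=
  ContDiff ℝ (⊤ : ℕ∞) U.1 ∧ ContDiff ℝ (⊤ : ℕ∞) U.2

/-- Smoothness of a prolongation section away from the zero section. -/
def SecSmoothOn (U : Sec A B) : Prop :=
  ContDiffOn ℝ (⊤ : ℕ∞) U.1 (Slit (A := A) (B := B)) ∧
    ContDiffOn ℝ (⊤ : ℕ∞) U.2 (Slit (A := A) (B := B))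

/-- Equality of prolongation sections away from the zero section. -/
def OnSlit (U V : Sec A B) : Prop :=
  ∀ p : A × B, p.2 ≠ 0 → U.1 p = V.1 p ∧ U.2 p = V.2 p

/-- The semispray associated to the horizontal endomorphism `𝓑` (i.e. `h(S)` for
any semispray `S`). -/
def Sassoc (𝓑 : A × B → B →L[ℝ] B) : Sec A B :=
  (fun p => p.2, fun p => 𝓑 p p.2)

/-- The Nijenhuis tensor `N_h` of the horizontal endomorphism `𝓑`. -/
def NijH (ρ : A → B →L[ℝ] A) (Lb : A → B →L[ℝ] B →L[ℝ] B)
    (𝓑 : A × B → B →L[ℝ] B) (U V : Sec A B) : Sec A B :=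
  pbr ρ Lb (hor 𝓑 U) (hor 𝓑 V) - hor 𝓑 (pbr ρ Lb (hor 𝓑 U) V)
    - hor 𝓑 (pbr ρ Lb U (hor 𝓑 V)) + hor 𝓑 (pbr ρ Lb U V)

/-- The curvature `Ω = −N_h` of a horizontal endomorphism. -/
def CurvH (ρ : A → B →L[ℝ] A) (Lb : A → B →L[ℝ] B →L[ℝ] B)
    (𝓑 : A × B → B →L[ℝ] B) (U V : Sec A B) : Sec A B :=
  - NijH ρ Lb 𝓑 U V

/-- The strong torsion `T = i_S t + H` of a horizontal endomorphism, where
`t = [J, h]^{F-N}` is the weak torsion and `H = [h, C]^{F-N}` the tension. -/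
def StrongTor (ρ : A → B →L[ℝ] A) (Lb : A → B →L[ℝ] B →L[ℝ] B)
    (𝓑 : A × B → B →L[ℝ] B) (U : Sec A B) : Sec A B :=
  fnKL ρ Lb vJ (hor 𝓑) (Sassoc 𝓑) U + fnKZ ρ Lb (hor 𝓑) Liou U

/-- The almost complex structure `F = h ∘ [S, h]^{F-N} − J` induced by a
horizontal endomorphism with associated semispray `S`. -/
def bigF (ρ : A → B →L[ℝ] A) (Lb : A → B →L[ℝ] B →L[ℝ] B)
    (𝓑 : A × B → B →L[ℝ] B) (U : Sec A B) : Sec A B :=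
  hor 𝓑 (fnZK ρ Lb (Sassoc 𝓑) (hor 𝓑) U) - vJ U

/-- Homogeneity of a horizontal endomorphism: its tension `H = [h, C]^{F-N}`
vanishes. -/
def HomogeneousH (ρ : A → B →L[ℝ] A) (Lb : A → B →L[ℝ] B →L[ℝ] B)
    (𝓑 : A × B → B →L[ℝ] B) : Prop :=
  ∀ U : Sec A B, SecSmoothOn U → OnSlit (fnKZ ρ Lb (hor 𝓑) Liou U) 0

/-- Torsion-freeness of a horizontal endomorphism: its weak torsion
`t = [J, h]^{F-N}` vanishes. -/
def TorsionFreeH (ρ : A → B →L[ℝ] A) (Lb : A → B →L[ℝ] B →L[ℝ] B)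
    (𝓑 : A × B → B →L[ℝ] B) : Prop :=
  ∀ U V : Sec A B, SecSmoothOn U → SecSmoothOn V →
    OnSlit (fnKL ρ Lb vJ (hor 𝓑) U V) 0

/-- The one-form `d^L_J F = i_J d^L F` of a Finsler function. -/
def θF (Fl : A × B → ℝ) (U : Sec A B) : A × B → ℝ :=
  fun p => fderiv ℝ Fl p ((0 : A), U.1 p)

/-- The fundamental two-form `ω = d^L d^L_J F` of a Finsler function. -/
def ωF (ρ : A → B →L[ℝ] A) (Lb : A → B →L[ℝ] B →L[ℝ] B)
    (Fl : A × B → ℝ) (U V : Sec A B) : A × B → ℝ :=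
  fun p => fderiv ℝ (θF Fl V) p (ρL ρ U p) - fderiv ℝ (θF Fl U) p (ρL ρ V p)
    - θF Fl (pbr ρ Lb U V) p

/-- The axioms of a Finsler algebroid: the fundamental function is smooth away
from the zero section, positive there, homogeneous of degree `2`
(`ρ_L(C)(F) = 2F`), and its fundamental form `ω = d^L d^L_J F` is
nondegenerate. -/
def IsFinslerData (ρ : A → B →L[ℝ] A) (Lb : A → B →L[ℝ] B →L[ℝ] B)
    (Fl : A × B → ℝ) : Prop :=
  ContDiffOn ℝ (⊤ : ℕ∞) Fl (Slit (A := A) (B := B)) ∧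
    (∀ p : A × B, p.2 ≠ 0 → 0 < Fl p) ∧
    (∀ p : A × B, p.2 ≠ 0 → fderiv ℝ Fl p ((0 : A), p.2) = 2 * Fl p) ∧
    (∀ W : Sec A B, SecSmoothOn W →
      (∀ U : Sec A B, SecSmoothOn U → ∀ p : A × B, p.2 ≠ 0 → ωF ρ Lb Fl W U p = 0) →
      ∀ p : A × B, p.2 ≠ 0 → W.1 p = 0 ∧ W.2 p = 0)

/-- Conservativity of a horizontal endomorphism: `d^L_h F = 0`. -/
def Conservative (ρ : A → B →L[ℝ] A) (Fl : A × B → ℝ)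
    (𝓑 : A × B → B →L[ℝ] B) : Prop :=
  ∀ p : A × B, p.2 ≠ 0 → ∀ z : B, fderiv ℝ Fl p (ρ p.1 z, 𝓑 p z) = 0

/-- The vertical metric `G(J X̃, J Ỹ) = ω(J X̃, Ỹ)`, evaluated on two vertical
sections. -/
def Gmet (ρ : A → B →L[ℝ] A) (Lb : A → B →L[ℝ] B →L[ℝ] B)
    (Fl : A × B → ℝ) (W₁ W₂ : Sec A B) : A × B → ℝ :=
  ωF ρ Lb Fl ((0 : (A × B) → B), W₁.2) (W₂.2, (0 : (A × B) → B))

/-- The prolongation `G̃(X̃, Ỹ) = G(J X̃, J Ỹ) + G(v X̃, v Ỹ)` of the vertical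
metric along the horizontal endomorphism `𝓑`. -/
def Gtil (ρ : A → B →L[ℝ] A) (Lb : A → B →L[ℝ] B →L[ℝ] B)
    (Fl : A × B → ℝ) (𝓑 : A × B → B →L[ℝ] B) (U V : Sec A B) : A × B → ℝ :=
  fun p => Gmet ρ Lb Fl (vJ U) (vJ V) p + Gmet ρ Lb Fl (vpr 𝓑 U) (vpr 𝓑 V) p

/-- The linear connection on `E` with Christoffel coefficient `Γ`:
`∇_X Y = ρ(X)(Y) + Γ(X, Y)`. -/
def covD (ρ : A → B →L[ℝ] A) (Γ : A → B →L[ℝ] B →L[ℝ] B) (X Y : A → B) : A → B :=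
  fun x => fderiv ℝ Y x (ρ x (X x)) + Γ x (X x) (Y x)

/-- The coefficient of the horizontal endomorphism `h_∇` generated by the linear
connection `Γ` (`𝓑^β_α = −y^γ Γ^β_{αγ}`). -/
def horOf (Γ : A → B →L[ℝ] B →L[ℝ] B) : A × B → B →L[ℝ] B :=
  fun p => -((Γ p.1).flip p.2)

section AlmostComplexStructure

variable (ρ : A → B →L[ℝ] A) (Lb : A → B →L[ℝ] B →L[ℝ] B) (𝓑 : A × B → B →L[ℝ] B)

/-- In `[S, hU]_L − h[S, U]_L` the derivatives of `U` cancel: only the derivative of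
`S^𝒳 = y` survives, and it picks out the fibre component of `ρ_L(U − hU)`. -/
lemma fst_fnZK_Sassoc_hor (U : Sec A B) :
    (fnZK ρ Lb (Sassoc 𝓑) (hor 𝓑) U).1 = fun p => U.2 p - 𝓑 p (U.1 p) := by
  funext p
  simp only [fnZK, pbr, hor, Sassoc, ρL, Prod.fst_sub, Pi.sub_apply, fderiv_snd,
    ContinuousLinearMap.coe_snd']
  abel

lemma bigF_eq (U : Sec A B) :
    bigF ρ Lb 𝓑 U =
      (fun p => U.2 p - 𝓑 p (U.1 p), fun p => 𝓑 p (U.2 p - 𝓑 p (U.1 p)) - U.1 p) := by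
  ext p <;> simp [bigF, hor, vJ, fst_fnZK_Sassoc_hor]

lemma bigF_vJ (U : Sec A B) : bigF ρ Lb 𝓑 (vJ U) = hor 𝓑 U := by
  ext p <;> simp [bigF_eq, vJ, hor]

lemma bigF_hor (U : Sec A B) : bigF ρ Lb 𝓑 (hor 𝓑 U) = -vJ U := by
  ext p <;> simp [bigF_eq, vJ, hor]

lemma vJ_bigF (U : Sec A B) : vJ (bigF ρ Lb 𝓑 U) = vpr 𝓑 U := by
  ext p <;> simp [bigF_eq, vJ, vpr, hor]

lemma bigF_vpr (U : Sec A B) : bigF ρ Lb 𝓑 (vpr 𝓑 U) = hor 𝓑 (bigF ρ Lb 𝓑 U) := by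
  ext p <;> simp [bigF_eq, vpr, hor]

end AlmostComplexStructure

theorem almost_complex_structure_relations_general
    (ρ : A → B →L[ℝ] A) (Lb : A → B →L[ℝ] B →L[ℝ] B)
    (𝓑 : A × B → B →L[ℝ] B) :
    ∀ U : Sec A B, SecSmoothOn U →
      OnSlit (bigF ρ Lb 𝓑 (vJ U)) (hor 𝓑 U) ∧
      OnSlit (bigF ρ Lb 𝓑 (hor 𝓑 U)) (-(vJ U)) ∧
      OnSlit (vJ (bigF ρ Lb 𝓑 U)) (vpr 𝓑 U) ∧
      OnSlit (bigF ρ Lb 𝓑 (vpr 𝓑 U)) (hor 𝓑 (bigF ρ Lb 𝓑 U)) := by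
  intro U _
  rw [bigF_vJ, bigF_hor, vJ_bigF, bigF_vpr]
  exact ⟨fun _ _ => ⟨rfl, rfl⟩, fun _ _ => ⟨rfl, rfl⟩, fun _ _ => ⟨rfl, rfl⟩,
    fun _ _ => ⟨rfl, rfl⟩⟩

/-- For a horizontal endomorphism `h` with associated
semispray `S` and induced almost complex structure `F = h[S,h]^{F-N} − J`:
`F ∘ J = h`, `F ∘ h = −J`, `J ∘ F = v`, `F ∘ v = h ∘ F`. -/
theorem almost_complex_structure_relations
    (ρ : A → B →L[ℝ] A) (Lb : A → B →L[ℝ] B →L[ℝ] B)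
    (halg : IsLieAlgebroidData ρ Lb)
    (𝓑 : A × B → B →L[ℝ] B)
    (h𝓑 : ContDiffOn ℝ (⊤ : ℕ∞) 𝓑 (Slit (A := A) (B := B))) :
    ∀ U : Sec A B, SecSmoothOn U →
      OnSlit (bigF ρ Lb 𝓑 (vJ U)) (hor 𝓑 U) ∧
      OnSlit (bigF ρ Lb 𝓑 (hor 𝓑 U)) (-(vJ U)) ∧
      OnSlit (vJ (bigF ρ Lb 𝓑 U)) (vpr 𝓑 U) ∧
      OnSlit (bigF ρ Lb 𝓑 (vpr 𝓑 U)) (hor 𝓑 (bigF ρ Lb 𝓑 U)) :=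
  almost_complex_structure_relations_general ρ Lb 𝓑
end
end

section
/- Let (E, F) be a Finsler algebroid and f ∈ C^∞(M). Define grad(f^∨) by d^L(f^∨) = i_{grad f^∨} ω, where ω is the fundamental form. Then: (i) grad(f^∨) is a vertical section of L^π E, (ii) [C, grad f^∨]_L = −grad f^∨, and (iii) ρ_L(grad f^∨)(F) = f^c. -/
/-!
We work with a Lie algebroid `π : E → M` in a (global) trivialization:
the base `M` is modelled on a real normed space `A`, the fibre of `E` is a real
normed space `B`, the total space is `E = A × B`, sections of `E` are maps
`A → B`, the anchor is `ρ : A → (B →L[ℝ] A)` and the structure function of the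
bracket is `Lb : A → (B →L[ℝ] B →L[ℝ] B)`.  The prolongation `L^π E → E` is the
trivial bundle with fibre `B × B`; its sections are pairs of maps `(A × B) → B`
(the components along the canonical frames `𝒳_α` and `𝒱_α`).
-/

noncomputable section

variable {A B : Type*} [NormedAddCommGroup A] [NormedSpace ℝ A]
  [NormedAddCommGroup B] [NormedSpace ℝ B]

/-!
On a vertical section `W`, `ω(W, U)` is the fibre Hessian `H` of `F` evaluated on `W` and the
vertical part of `U`. Pairing `i_G ω = d^L f^∨` with constant vertical sections gives
`H(J G, ·) = 0`, so `J G = 0` by nondegeneracy; pairing with constant sections along `𝒳` then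
gives `H(G, v) = df(ρ v)` for vertical `v`. Differentiating Euler's relation `dF(C) = 2F` gives
`H(C, v) = dF(v)`, whence `ρ_L(G)(F) = f^c`, and differentiating once more shows that the third
derivative of `F` vanishes in the direction `C` on vertical vectors. So differentiating
`H(G, v) = df(ρ v)`, whose right side is constant on the fibres, along `C` gives
`H(C(G), v) = 0`; by nondegeneracy `C(G) = 0`, i.e. `G` is fibrewise homogeneous of degree `0`,
which is `[C, G]_L = −G`.
-/

section Calculus

variable {𝕜 : Type*} [NontriviallyNormedField 𝕜]
  {E F G : Type*} [NormedAddCommGroup E] [NormedSpace 𝕜 E] [NormedAddCommGroup F]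
  [NormedSpace 𝕜 F] [NormedAddCommGroup G] [NormedSpace 𝕜 G]

theorem fderiv_comp_fst (g : E → G) (q : E × F) :
    fderiv 𝕜 (fun r : E × F => g r.1) q
      = (fderiv 𝕜 g q.1).comp (ContinuousLinearMap.fst 𝕜 E F) := by
  by_cases hg : DifferentiableAt 𝕜 g q.1
  · exact (hg.hasFDerivAt.comp q hasFDerivAt_fst).fderiv
  · have hg' : ¬ DifferentiableAt 𝕜 (fun r : E × F => g r.1) q := fun h =>
      hg (h.comp (f := fun x : E => (x, q.2)) q.1
        (differentiableAt_id.prodMk (differentiableAt_const q.2)))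
    rw [fderiv_zero_of_not_differentiableAt hg', fderiv_zero_of_not_differentiableAt hg,
      ContinuousLinearMap.zero_comp]

theorem fderiv_clm_apply_const_apply {M : E → F →L[𝕜] G} {q : E} (hM : DifferentiableAt 𝕜 M q)
    (c : F) (h : E) : fderiv 𝕜 (fun r => M r c) q h = fderiv 𝕜 M q h c := by
  simp [fderiv_clm_apply hM (differentiableAt_const c)]

theorem ContDiffAt.fderiv_of_infty {g : E → F} {p : E} (hg : ContDiffAt 𝕜 (⊤ : ℕ∞) g p) :
    ContDiffAt 𝕜 (⊤ : ℕ∞) (fderiv 𝕜 g) p :=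
  hg.fderiv_right (by simp)

theorem ContDiffAt.isSymmSndFDerivAt_of_infty {𝕜 : Type*} [RCLike 𝕜] [NormedSpace 𝕜 E]
    [NormedSpace 𝕜 F] {g : E → F} {p : E} (hg : ContDiffAt 𝕜 (⊤ : ℕ∞) g p) :
    IsSymmSndFDerivAt 𝕜 g p :=
  hg.isSymmSndFDerivAt (by
    simp only [minSmoothness_of_isRCLikeNormedField]; exact WithTop.coe_le_coe.2 le_top)

end Calculus

open Topology

theorem fderiv_apply_vertical {F : Type*} [NormedAddCommGroup F] [NormedSpace ℝ F]
    {Φ : A × B → A × B →L[ℝ] F} {w : A × B → B} {q : A × B}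
    (hΦ : DifferentiableAt ℝ Φ q) (hw : DifferentiableAt ℝ w q) (h : A × B) :
    fderiv ℝ (fun r => Φ r ((0 : A), w r)) q h
      = Φ q ((0 : A), fderiv ℝ w q h) + fderiv ℝ Φ q h ((0 : A), w q) := by
  have hv : HasFDerivAt (fun r => ((0 : A), w r))
      ((0 : A × B →L[ℝ] A).prod (fderiv ℝ w q)) q :=
    (hasFDerivAt_const 0 q).prodMk hw.hasFDerivAt
  simp [fderiv_clm_apply hΦ hv.differentiableAt, hv.fderiv]

theorem isOpen_slit {A B : Type*} [TopologicalSpace A] [NormedAddCommGroup B] :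
    IsOpen (Slit (A := A) (B := B)) :=
  isOpen_compl_singleton.preimage continuous_snd

theorem slit_mem_nhds {A B : Type*} [TopologicalSpace A] [NormedAddCommGroup B] {p : A × B}
    (hp : p.2 ≠ 0) : Slit ∈ 𝓝 p :=
  isOpen_slit.mem_nhds hp

theorem ContDiffOn.contDiffAt_of_mem_slit {F : Type*} [NormedAddCommGroup F] [NormedSpace ℝ F]
    {g : A × B → F} (hg : ContDiffOn ℝ (⊤ : ℕ∞) g Slit) {p : A × B} (hp : p.2 ≠ 0) :
    ContDiffAt ℝ (⊤ : ℕ∞) g p :=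
  hg.contDiffAt (slit_mem_nhds hp)

section FinslerFunction

variable {Fl : A × B → ℝ}

theorem fderiv_θF_apply {p : A × B} (hFl : ContDiffAt ℝ (⊤ : ℕ∞) Fl p) {U : Sec A B}
    (hU : DifferentiableAt ℝ U.1 p) (h : A × B) :
    fderiv ℝ (θF Fl U) p h
      = fderiv ℝ (fderiv ℝ Fl) p h ((0 : A), U.1 p) + fderiv ℝ Fl p ((0 : A), fderiv ℝ U.1 p h) :=
  (fderiv_apply_vertical (hFl.fderiv_of_infty.differentiableAt (by simp)) hU h).trans
    (add_comm _ _)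

theorem ωF_eq {ρ : A → B →L[ℝ] A} {Lb : A → B →L[ℝ] B →L[ℝ] B} {p : A × B}
    (hFl : ContDiffAt ℝ (⊤ : ℕ∞) Fl p) {U V : Sec A B}
    (hU : DifferentiableAt ℝ U.1 p) (hV : DifferentiableAt ℝ V.1 p) :
    ωF ρ Lb Fl U V p
      = fderiv ℝ (fderiv ℝ Fl) p (ρL ρ U p) ((0 : A), V.1 p)
        - fderiv ℝ (fderiv ℝ Fl) p (ρL ρ V p) ((0 : A), U.1 p)
        - fderiv ℝ Fl p ((0 : A), Lb p.1 (U.1 p) (V.1 p)) := by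
  have hθ : θF Fl (pbr ρ Lb U V) p = fderiv ℝ Fl p
      (((0 : A), fderiv ℝ V.1 p (ρL ρ U p)) - ((0 : A), fderiv ℝ U.1 p (ρL ρ V p))
        + ((0 : A), Lb p.1 (U.1 p) (V.1 p))) := by
    simp [θF, pbr]
  rw [ωF, fderiv_θF_apply hFl hV, fderiv_θF_apply hFl hU, hθ, map_add, map_sub]
  ring

theorem ωF_vertical_left {ρ : A → B →L[ℝ] A} {Lb : A → B →L[ℝ] B →L[ℝ] B} {p : A × B}
    (hFl : ContDiffAt ℝ (⊤ : ℕ∞) Fl p) (w : A × B → B) {U : Sec A B}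
    (hU : DifferentiableAt ℝ U.1 p) :
    ωF ρ Lb Fl (0, w) U p = fderiv ℝ (fderiv ℝ Fl) p ((0 : A), w p) ((0 : A), U.1 p) := by
  rw [ωF_eq hFl (differentiableAt_const 0) hU]
  simp [ρL, Prod.mk_zero_zero]

theorem hessian_liouville (hFl : ContDiffOn ℝ (⊤ : ℕ∞) Fl Slit)
    (heu : ∀ q : A × B, q.2 ≠ 0 → fderiv ℝ Fl q ((0 : A), q.2) = 2 * Fl q)
    {p : A × B} (hp : p.2 ≠ 0) (a : B) :
    fderiv ℝ (fderiv ℝ Fl) p ((0 : A), a) ((0 : A), p.2) = fderiv ℝ Fl p ((0 : A), a) := by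
  have hc := hFl.contDiffAt_of_mem_slit hp
  have hev : (fun q => fderiv ℝ Fl q ((0 : A), q.2)) =ᶠ[𝓝 p] fun q => 2 * Fl q := by
    filter_upwards [slit_mem_nhds hp] with q hq using heu q hq
  have h := congrArg (· ((0 : A), a)) (hev.fderiv_eq (𝕜 := ℝ))
  rw [fderiv_apply_vertical (hc.fderiv_of_infty.differentiableAt (by simp)) differentiableAt_snd,
    fderiv_const_mul (hc.differentiableAt (by simp))] at h
  simp only [fderiv_snd, ContinuousLinearMap.coe_snd', smul_apply,
    smul_eq_mul] at h
  linarith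

theorem fderiv_hessian_liouville_vertical (hFl : ContDiffOn ℝ (⊤ : ℕ∞) Fl Slit)
    (heu : ∀ q : A × B, q.2 ≠ 0 → fderiv ℝ Fl q ((0 : A), q.2) = 2 * Fl q)
    {p : A × B} (hp : p.2 ≠ 0) (a b : B) :
    fderiv ℝ (fderiv ℝ (fderiv ℝ Fl)) p ((0 : A), p.2) ((0 : A), b) ((0 : A), a) = 0 := by
  have hc' := (hFl.contDiffAt_of_mem_slit hp).fderiv_of_infty
  have hc'' := hc'.fderiv_of_infty
  have hev : (fun q => fderiv ℝ (fderiv ℝ Fl) q ((0 : A), q.2) ((0 : A), a))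
      =ᶠ[𝓝 p] fun q => fderiv ℝ Fl q ((0 : A), a) := by
    filter_upwards [slit_mem_nhds hp] with q hq
    rw [(hFl.contDiffAt_of_mem_slit hq).isSymmSndFDerivAt_of_infty, hessian_liouville hFl heu hq]
  have h := congrArg (· ((0 : A), b)) (hev.fderiv_eq (𝕜 := ℝ))
  rw [fderiv_clm_apply_const_apply ((hc''.differentiableAt (by simp)).clm_apply
      (differentiableAt_const _ |>.prodMk differentiableAt_snd)),
    fderiv_apply_vertical (hc''.differentiableAt (by simp)) differentiableAt_snd,
    fderiv_clm_apply_const_apply (hc'.differentiableAt (by simp))] at h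
  simp only [fderiv_snd, ContinuousLinearMap.coe_snd', add_apply,
    add_eq_left] at h
  rw [hc'.isSymmSndFDerivAt_of_infty]
  exact h

end FinslerFunction

theorem SecSmoothOn.differentiableAt_fst {U : Sec A B} (hU : SecSmoothOn U) {p : A × B}
    (hp : p.2 ≠ 0) : DifferentiableAt ℝ U.1 p :=
  (hU.1.contDiffAt_of_mem_slit hp).differentiableAt (by simp)

theorem SecSmoothOn.differentiableAt_snd {U : Sec A B} (hU : SecSmoothOn U) {p : A × B}
    (hp : p.2 ≠ 0) : DifferentiableAt ℝ U.2 p :=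
  (hU.2.contDiffAt_of_mem_slit hp).differentiableAt (by simp)

theorem fderiv_fvert_apply (f : A → ℝ) (q h : A × B) :
    fderiv ℝ (fvert (B := B) f) q h = fderiv ℝ f q.1 h.1 := by
  rw [show fvert (B := B) f = fun r => f r.1 from rfl, fderiv_comp_fst]
  rfl

theorem eq_zero_of_hessian_vertical {ρ : A → B →L[ℝ] A} {Lb : A → B →L[ℝ] B →L[ℝ] B}
    {Fl : A × B → ℝ} (hF : IsFinslerData ρ Lb Fl) {w : A × B → B}
    (hw : ContDiffOn ℝ (⊤ : ℕ∞) w Slit)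
    (h : ∀ q : A × B, q.2 ≠ 0 → ∀ u : B, fderiv ℝ (fderiv ℝ Fl) q ((0 : A), w q) ((0 : A), u) = 0)
    {p : A × B} (hp : p.2 ≠ 0) : w p = 0 := by
  refine (hF.2.2.2 (0, w) ⟨contDiffOn_const, hw⟩ (fun U hU q hq => ?_) p hp).2
  rw [ωF_vertical_left (hF.1.contDiffAt_of_mem_slit hq) w (hU.differentiableAt_fst hq)]
  exact h q hq _

theorem pbr_liou_eq_neg_of_vertical {ρ : A → B →L[ℝ] A} {Lb : A → B →L[ℝ] B →L[ℝ] B} {G : Sec A B}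
    (hG₁ : ∀ p : A × B, p.2 ≠ 0 → G.1 p = 0)
    (hG₂ : ∀ p : A × B, p.2 ≠ 0 → fderiv ℝ G.2 p ((0 : A), p.2) = 0) :
    OnSlit (pbr ρ Lb Liou G) (-G) := by
  intro p hp
  have hfd1 : fderiv ℝ G.1 p = 0 := by
    have hev : G.1 =ᶠ[𝓝 p] fun _ => 0 := by
      filter_upwards [slit_mem_nhds hp] with q hq using hG₁ q hq
    rw [hev.fderiv_eq, fderiv_const_apply]
  have hfdL : fderiv ℝ (fun q : A × B => q.2) p = ContinuousLinearMap.snd ℝ A B := fderiv_snd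
  simp [pbr, ρL, Liou, hfd1, hfdL, hG₁ p hp, hG₂ p hp]

def IsGradient (ρ : A → B →L[ℝ] A) (Lb : A → B →L[ℝ] B →L[ℝ] B) (Fl : A × B → ℝ)
    (φ : A × B → ℝ) (G : Sec A B) : Prop :=
  ∀ U : Sec A B, SecSmoothOn U → ∀ p : A × B, p.2 ≠ 0 →
    ωF ρ Lb Fl G U p = fderiv ℝ φ p (ρL ρ U p)

namespace IsGradient

variable {ρ : A → B →L[ℝ] A} {Lb : A → B →L[ℝ] B →L[ℝ] B} {Fl : A × B → ℝ} {f : A → ℝ}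
  {G : Sec A B}

theorem hessian_fst_eq_zero (hG : IsGradient ρ Lb Fl (fvert f) G)
    (hFl : ContDiffOn ℝ (⊤ : ℕ∞) Fl Slit) (hGs : SecSmoothOn G) {p : A × B} (hp : p.2 ≠ 0)
    (u : B) : fderiv ℝ (fderiv ℝ Fl) p ((0 : A), u) ((0 : A), G.1 p) = 0 := by
  have h := hG (0, fun _ => u) ⟨contDiffOn_const, contDiffOn_const⟩ p hp
  rw [ωF_eq (hFl.contDiffAt_of_mem_slit hp) (hGs.differentiableAt_fst hp)
    (differentiableAt_const _), fderiv_fvert_apply] at h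
  simpa [ρL, Prod.mk_zero_zero] using h

theorem fst_eq_zero (hG : IsGradient ρ Lb Fl (fvert f) G) (hF : IsFinslerData ρ Lb Fl)
    (hGs : SecSmoothOn G) {p : A × B} (hp : p.2 ≠ 0) : G.1 p = 0 :=
  eq_zero_of_hessian_vertical hF hGs.1 (fun q hq u => by
    rw [(hF.1.contDiffAt_of_mem_slit hq).isSymmSndFDerivAt_of_infty]
    exact hG.hessian_fst_eq_zero hF.1 hGs hq u) hp

theorem hessian_snd (hG : IsGradient ρ Lb Fl (fvert f) G) (hFl : ContDiffOn ℝ (⊤ : ℕ∞) Fl Slit)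
    (hGs : SecSmoothOn G) (hG₁ : ∀ p : A × B, p.2 ≠ 0 → G.1 p = 0) {p : A × B} (hp : p.2 ≠ 0)
    (u : B) :
    fderiv ℝ (fderiv ℝ Fl) p ((0 : A), G.2 p) ((0 : A), u) = fderiv ℝ f p.1 (ρ p.1 u) := by
  have h := hG (fun _ => u, 0) ⟨contDiffOn_const, contDiffOn_const⟩ p hp
  rw [ωF_eq (hFl.contDiffAt_of_mem_slit hp) (hGs.differentiableAt_fst hp)
    (differentiableAt_const _), fderiv_fvert_apply] at h
  simpa [ρL, hG₁ p hp, Prod.mk_zero_zero] using h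

theorem hessian_fderiv_snd_liouville (hG : IsGradient ρ Lb Fl (fvert f) G)
    (hFl : ContDiffOn ℝ (⊤ : ℕ∞) Fl Slit)
    (heu : ∀ q : A × B, q.2 ≠ 0 → fderiv ℝ Fl q ((0 : A), q.2) = 2 * Fl q)
    (hGs : SecSmoothOn G) (hG₁ : ∀ p : A × B, p.2 ≠ 0 → G.1 p = 0) {p : A × B} (hp : p.2 ≠ 0)
    (u : B) :
    fderiv ℝ (fderiv ℝ Fl) p ((0 : A), fderiv ℝ G.2 p ((0 : A), p.2)) ((0 : A), u) = 0 := by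
  have hc := (hFl.contDiffAt_of_mem_slit hp).fderiv_of_infty.fderiv_of_infty
  have hev : (fun q => fderiv ℝ (fderiv ℝ Fl) q ((0 : A), G.2 q) ((0 : A), u))
      =ᶠ[𝓝 p] fun q => fderiv ℝ f q.1 (ρ q.1 u) := by
    filter_upwards [slit_mem_nhds hp] with q hq using hG.hessian_snd hFl hGs hG₁ hq u
  have h := congrArg (· ((0 : A), p.2)) (hev.fderiv_eq (𝕜 := ℝ))
  rw [fderiv_clm_apply_const_apply ((hc.differentiableAt (by simp)).clm_apply
      ((differentiableAt_const _).prodMk (hGs.differentiableAt_snd hp))),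
    fderiv_apply_vertical (hc.differentiableAt (by simp)) (hGs.differentiableAt_snd hp),
    fderiv_comp_fst (fun x => fderiv ℝ f x (ρ x u))] at h
  simpa [fderiv_hessian_liouville_vertical hFl heu hp] using h

theorem fderiv_snd_liouville_eq_zero (hG : IsGradient ρ Lb Fl (fvert f) G)
    (hF : IsFinslerData ρ Lb Fl) (hGs : SecSmoothOn G) (hG₁ : ∀ p : A × B, p.2 ≠ 0 → G.1 p = 0)
    {p : A × B} (hp : p.2 ≠ 0) : fderiv ℝ G.2 p ((0 : A), p.2) = 0 := by
  have hDG₂ : ContDiffOn ℝ (⊤ : ℕ∞) (fderiv ℝ G.2) Slit := fun q hq =>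
    (hGs.2.contDiffAt_of_mem_slit hq).fderiv_of_infty.contDiffWithinAt
  have hsmooth : ContDiffOn ℝ (⊤ : ℕ∞) (fun q => fderiv ℝ G.2 q ((0 : A), q.2)) Slit :=
    hDG₂.clm_apply (contDiff_const.prodMk contDiff_snd).contDiffOn
  exact eq_zero_of_hessian_vertical hF hsmooth
    (fun q hq u => hG.hessian_fderiv_snd_liouville hF.1 hF.2.2.1 hGs hG₁ hq u) hp

theorem fderiv_ρL_eq_fcomp (hG : IsGradient ρ Lb Fl (fvert f) G)
    (hFl : ContDiffOn ℝ (⊤ : ℕ∞) Fl Slit)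
    (heu : ∀ q : A × B, q.2 ≠ 0 → fderiv ℝ Fl q ((0 : A), q.2) = 2 * Fl q)
    (hGs : SecSmoothOn G) (hG₁ : ∀ p : A × B, p.2 ≠ 0 → G.1 p = 0) {p : A × B} (hp : p.2 ≠ 0) :
    fderiv ℝ Fl p (ρL ρ G p) = fcomp ρ f p := by
  rw [ρL, hG₁ p hp, map_zero, ← hessian_liouville hFl heu hp, hG.hessian_snd hFl hGs hG₁ hp]
  rfl

end IsGradient

theorem gradient_of_vertical_lift_general
    (ρ : A → B →L[ℝ] A) (Lb : A → B →L[ℝ] B →L[ℝ] B)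
    (Fl : A × B → ℝ) (hF : IsFinslerData ρ Lb Fl)
    (f : A → ℝ)
    (G : Sec A B) (hGs : SecSmoothOn G)
    -- the defining property `i_{grad f^∨} ω = d^L (f^∨)`:
    (hdef : ∀ U : Sec A B, SecSmoothOn U → ∀ p : A × B, p.2 ≠ 0 →
      ωF ρ Lb Fl G U p = fderiv ℝ (fvert (B := B) f) p (ρL ρ U p)) :
    (∀ p : A × B, p.2 ≠ 0 → G.1 p = 0) ∧
    OnSlit (pbr ρ Lb Liou G) (-G) ∧
    (∀ p : A × B, p.2 ≠ 0 → fderiv ℝ Fl p (ρL ρ G p) = fcomp ρ f p) := by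
  have hG : IsGradient ρ Lb Fl (fvert f) G := hdef
  have hG₁ : ∀ p : A × B, p.2 ≠ 0 → G.1 p = 0 := fun p hp => hG.fst_eq_zero hF hGs hp
  exact ⟨hG₁,
    pbr_liou_eq_neg_of_vertical hG₁ fun p hp => hG.fderiv_snd_liouville_eq_zero hF hGs hG₁ hp,
    fun p hp => hG.fderiv_ρL_eq_fcomp hF.1 hF.2.2.1 hGs hG₁ hp⟩

/-- On a Finsler algebroid, the gradient of `f^∨` (defined by
`d^L(f^∨) = i_{grad f^∨} ω`) is vertical, satisfies
`[C, grad f^∨]_L = −grad f^∨` and `ρ_L(grad f^∨)(F) = f^c`. -/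
theorem gradient_of_vertical_lift
    (ρ : A → B →L[ℝ] A) (Lb : A → B →L[ℝ] B →L[ℝ] B)
    (halg : IsLieAlgebroidData ρ Lb)
    (Fl : A × B → ℝ) (hF : IsFinslerData ρ Lb Fl)
    (f : A → ℝ) (hf : ContDiff ℝ (⊤ : ℕ∞) f)
    (G : Sec A B) (hGs : SecSmoothOn G)
    -- the defining property `i_{grad f^∨} ω = d^L (f^∨)`:
    (hdef : ∀ U : Sec A B, SecSmoothOn U → ∀ p : A × B, p.2 ≠ 0 →
      ωF ρ Lb Fl G U p = fderiv ℝ (fvert (B := B) f) p (ρL ρ U p)) :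
    (∀ p : A × B, p.2 ≠ 0 → G.1 p = 0) ∧
    OnSlit (pbr ρ Lb Liou G) (-G) ∧
    (∀ p : A × B, p.2 ≠ 0 → fderiv ℝ Fl p (ρL ρ G p) = fcomp ρ f p) :=
  gradient_of_vertical_lift_general ρ Lb Fl hF f G hGs hdef
end
end
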